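/- If a Lie algebra 𝔤 of dimension ≥ 4 contains an abelian subalgebra of codimension 1, then 𝔤 admits neither a contact form (if dim 𝔤 is odd) nor an exact symplectic form (if dim 𝔤 is even). -/

import Mathlib

/-!
Write `m = dim 𝔤` and, for a linear form `f`, let `x ↦ f ⁅x, ·⁆` be the map `𝔤 → 𝔤*` whose
kernel is the radical of `∂f`. Since `A` is abelian, it sends `A` into the annihilator of `A`,
a space of dimension `m - dim A = 1`. So it cannot be injective on a subspace of `A` of
dimension `≥ 2`. An exact symplectic form needs it to be injective on `A` (dimension `m - 1 ≥ 3`),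
a contact form `η` on `A ∩ ker η` (dimension `≥ m - 2 ≥ 2`).
-/

open Module

/-- `η` is a contact form on the odd-dimensional real Lie algebra `L`: equivalently to the
condition `(∂η)^n ∧ η ≠ 0` (with `dim L = 2n+1`, `∂η (x,y) = -η ⁅x,y⁆`), `η ≠ 0` and the
2-form `∂η` is nondegenerate on the kernel of `η`. -/
def IsContactForm {L : Type*} [LieRing L] [LieAlgebra ℝ L] (η : Module.Dual ℝ L) : Prop :=
  η ≠ 0 ∧ ∀ x : L, η x = 0 → (∀ y : L, η y = 0 → η ⁅x, y⁆ = 0) → x = 0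

/-- `α` is an exact symplectic form on the even-dimensional real Lie algebra `L`:
equivalently to `(∂α)^m ≠ 0` (with `dim L = 2m`), the 2-form `∂α (x,y) = -α ⁅x,y⁆`
is nondegenerate. -/
def IsExactSymplecticForm {L : Type*} [LieRing L] [LieAlgebra ℝ L] (α : Module.Dual ℝ L) : Prop :=
  ∀ x : L, (∀ y : L, α ⁅x, y⁆ = 0) → x = 0

namespace LieAlgebra

variable {K L : Type*} [Field K] [LieRing L] [LieAlgebra K L]

/-- `-∂f`, seen as a map `L → L*`. -/
def bracketForm (f : Dual K L) : L →ₗ[K] Dual K L :=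
  (LieModule.toEnd K L L : L →ₗ[K] Module.End K L).compr₂ f

@[simp]
lemma bracketForm_apply (f : Dual K L) (x y : L) : bracketForm f x y = f ⁅x, y⁆ := rfl

lemma bracketForm_mem_dualAnnihilator {A : Submodule K L} (hA : ∀ x ∈ A, ∀ y ∈ A, ⁅x, y⁆ = 0)
    (f : Dual K L) {x : L} (hx : x ∈ A) : bracketForm f x ∈ A.dualAnnihilator :=
  (Submodule.mem_dualAnnihilator _).2 fun y hy => by rw [bracketForm_apply, hA x hx y hy, map_zero]

theorem finrank_add_finrank_le_of_disjoint_ker_bracketForm [FiniteDimensional K L]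
    {A S : Submodule K L} (hA : ∀ x ∈ A, ∀ y ∈ A, ⁅x, y⁆ = 0) (f : Dual K L) (hSA : S ≤ A)
    (hS : Disjoint S (LinearMap.ker (bracketForm f))) :
    finrank K S + finrank K A ≤ finrank K L := by
  let φ : S →ₗ[K] A.dualAnnihilator := ((bracketForm f).domRestrict S).codRestrict _
    fun x => bracketForm_mem_dualAnnihilator hA f (hSA x.2)
  have hφ : Function.Injective φ := fun x y hxy =>
    LinearMap.injective_domRestrict_iff.2 hS (congrArg Subtype.val hxy)
  have := LinearMap.finrank_le_finrank_of_injective hφ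
  have := Subspace.finrank_add_finrank_dualAnnihilator_eq A
  omega

end LieAlgebra

open LieAlgebra

lemma IsExactSymplecticForm.ker_bracketForm_eq_bot {L : Type*} [LieRing L] [LieAlgebra ℝ L]
    {α : Dual ℝ L} (hα : IsExactSymplecticForm α) : LinearMap.ker (bracketForm α) = ⊥ :=
  LinearMap.ker_eq_bot'.2 fun x hx => hα x fun y => LinearMap.congr_fun hx y

lemma IsContactForm.disjoint_ker_bracketForm {L : Type*} [LieRing L] [LieAlgebra ℝ L]
    {η : Dual ℝ L} (hη : IsContactForm η) :
    Disjoint (LinearMap.ker η) (LinearMap.ker (bracketForm η)) :=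
  Submodule.disjoint_def.2 fun x hx hx' =>
    hη.2 x hx fun y _ => LinearMap.congr_fun (LinearMap.mem_ker.1 hx') y

/-- A Lie algebra of dimension at least 4 with an abelian subalgebra of codimension 1 has
neither a contact form nor an exact symplectic form. -/
theorem codim_one_abelian_no_contact_no_symplectic {L : Type*} [LieRing L] [LieAlgebra ℝ L]
    [FiniteDimensional ℝ L] (hdim : 4 ≤ finrank ℝ L)
    (A : LieSubalgebra ℝ L)
    (hab : ∀ x ∈ A, ∀ y ∈ A, ⁅x, y⁆ = (0 : L))
    (hcodim : finrank ℝ ↥A = finrank ℝ L - 1) :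
    (∀ η : Module.Dual ℝ L, ¬ IsContactForm η) ∧
    (∀ α : Module.Dual ℝ L, ¬ IsExactSymplecticForm α) := by
  have hab' : ∀ x ∈ A.toSubmodule, ∀ y ∈ A.toSubmodule, ⁅x, y⁆ = 0 := hab
  change finrank ℝ A.toSubmodule = _ at hcodim
  refine ⟨fun η hη => ?_, fun α hα => ?_⟩
  · have hker := Dual.finrank_ker_add_one_of_ne_zero hη.1
    have hinf := finrank_add_finrank_le_of_disjoint_ker_bracketForm hab' η inf_le_left
      (hη.disjoint_ker_bracketForm.mono_left inf_le_right)
    have hsup := Submodule.finrank_sup_add_finrank_inf_eq A.toSubmodule (LinearMap.ker η)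
    have hsup_le := Submodule.finrank_le (A.toSubmodule ⊔ LinearMap.ker η)
    omega
  · have hA := finrank_add_finrank_le_of_disjoint_ker_bracketForm hab' α le_rfl
      (by rw [hα.ker_bracketForm_eq_bot]; exact disjoint_bot_right)
    omega
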